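/- There exist uncountably many sequences (a_k) of positive integers, each taking values in {1,2,4}, that are not eventually periodic and such that for the associated convergents s_k/t_k all t_k are odd and the Jacobi symbol (s_k/t_k) = 1 for all k ≥ 0. -/

import Mathlib

/-- Numerators of continued fraction convergents: `cfS a k = s_k`
(with `s_{-1} = 1`, `s_0 = a_0`, `s_k = a_k s_{k-1} + s_{k-2}`). -/
def cfS (a : ℕ → ℤ) : ℕ → ℤ
  | 0 => a 0
  | 1 => a 1 * a 0 + 1
  | (k+2) => a (k+2) * cfS a (k+1) + cfS a k

/-- Denominators of continued fraction convergents: `cfT a k = t_k`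
(with `t_{-1} = 0`, `t_0 = 1`, `t_k = a_k t_{k-1} + t_{k-2}`). -/
def cfT (a : ℕ → ℤ) : ℕ → ℤ
  | 0 => 1
  | 1 => a 1
  | (k+2) => a (k+2) * cfT a (k+1) + cfT a k

/-!
Take `a₀ = a₁ = 1`, `a_k = 4` for even `k ≥ 2`, and `a_k ∈ {2, 4}` free for odd `k ≥ 3`.
Then every `t_k` is odd and positive, and `t_k ≡ t_{k-2} ≡ 1 (mod 4)` for even `k`. Since
`t_{k+1} ≡ t_{k-1} (mod t_k)` and one of two consecutive `t`'s is `1 mod 4`, quadratic reciprocity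
gives `(t_k / t_{k+1}) = (t_{k-1} / t_k) = ⋯ = (t_0 / t_1) = 1`. The determinant identity
`s_{k+1} t_k - s_k t_{k+1} = (-1)^k` then yields `(s_{k+1} / t_{k+1}) = ((-1)^k / t_{k+1}) = 1`,
the last because `t_{k+1} ≡ 1 (mod 4)` whenever `k` is odd. The free choices at odd places give
uncountably many such sequences, while only countably many sequences are eventually periodic.
-/

open Set Function

section ContinuedFraction

variable (a : ℕ → ℤ)

theorem cfS_add_two (k : ℕ) : cfS a (k + 2) = a (k + 2) * cfS a (k + 1) + cfS a k := rfl

theorem cfT_add_two (k : ℕ) : cfT a (k + 2) = a (k + 2) * cfT a (k + 1) + cfT a k := rfl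

theorem cfS_mul_cfT_sub_cfS_mul_cfT (k : ℕ) :
    cfS a (k + 1) * cfT a k - cfS a k * cfT a (k + 1) = (-1) ^ k := by
  induction k with
  | zero => simp only [cfS, cfT]; ring
  | succ k ih =>
    rw [cfS_add_two, cfT_add_two, pow_succ]
    linear_combination (-1 : ℤ) * ih

variable {a}

theorem cfT_pos (h : ∀ k, 0 < a (k + 1)) (k : ℕ) : 0 < cfT a k := by
  suffices ∀ k, 0 < cfT a k ∧ 0 < cfT a (k + 1) from (this k).1
  intro k
  induction k with
  | zero => exact ⟨one_pos, h 0⟩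
  | succ k ih => exact ⟨ih.2, by rw [cfT_add_two]; exact add_pos (mul_pos (h _) ih.2) ih.1⟩

theorem cfT_odd (h₁ : Odd (a 1)) (h : ∀ k, Even (a (k + 2))) (k : ℕ) : Odd (cfT a k) := by
  suffices ∀ k, Odd (cfT a k) ∧ Odd (cfT a (k + 1)) from (this k).1
  intro k
  induction k with
  | zero => exact ⟨odd_one, h₁⟩
  | succ k ih => exact ⟨ih.2, by rw [cfT_add_two]; exact ((h k).mul_right _).add_odd ih.1⟩

theorem cfT_two_mul_emod_four (h : ∀ k, 4 ∣ a (2 * k + 2)) (k : ℕ) : cfT a (2 * k) % 4 = 1 := by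
  induction k with
  | zero => rfl
  | succ k ih =>
    obtain ⟨c, hc⟩ := h k
    rw [mul_add, mul_one, cfT_add_two, hc, mul_assoc, add_comm, Int.add_mul_emod_self_left, ih]

end ContinuedFraction

theorem jacobiSym_natAbs_comm {m n : ℤ} (hm₀ : 0 ≤ m) (hn₀ : 0 ≤ n) (hm : Odd m) (hn : Odd n)
    (h : m % 4 = 1 ∨ n % 4 = 1) : jacobiSym m n.natAbs = jacobiSym n m.natAbs := by
  lift m to ℕ using hm₀
  lift n to ℕ using hn₀
  simp only [Int.natAbs_natCast]
  rcases h with h | h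
  · exact jacobiSym.quadratic_reciprocity_one_mod_four (by omega) (Int.odd_coe_nat n |>.mp hn)
  · exact jacobiSym.quadratic_reciprocity_one_mod_four' (Int.odd_coe_nat m |>.mp hm) (by omega)

section Jacobi

variable {a : ℕ → ℤ} (hpos : ∀ k, 0 < cfT a k) (hodd : ∀ k, Odd (cfT a k))
  (hmod : ∀ k, cfT a (2 * k) % 4 = 1)
include hpos hodd hmod

theorem jacobiSym_cfT_cfT_succ (k : ℕ) : jacobiSym (cfT a k) (cfT a (k + 1)).natAbs = 1 := by
  induction k with
  | zero => exact jacobiSym.one_left _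
  | succ k ih =>
    have hfour : cfT a (k + 1) % 4 = 1 ∨ cfT a (k + 2) % 4 = 1 := by
      rcases Nat.even_or_odd' k with ⟨j, rfl | rfl⟩
      · exact .inr (hmod (j + 1))
      · exact .inl (hmod (j + 1))
    have hreduce : cfT a (k + 2) % (cfT a (k + 1)).natAbs = cfT a k % (cfT a (k + 1)).natAbs := by
      rw [Int.natAbs_of_nonneg (hpos _).le, cfT_add_two, add_comm, Int.add_mul_emod_self_right]
    calc jacobiSym (cfT a (k + 1)) (cfT a (k + 2)).natAbs
        = jacobiSym (cfT a (k + 2)) (cfT a (k + 1)).natAbs :=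
          jacobiSym_natAbs_comm (hpos _).le (hpos _).le (hodd _) (hodd _) hfour
      _ = jacobiSym (cfT a k) (cfT a (k + 1)).natAbs := jacobiSym.mod_left' hreduce
      _ = 1 := ih

theorem jacobiSym_cfS_cfT (k : ℕ) : jacobiSym (cfS a k) (cfT a k).natAbs = 1 := by
  cases k with
  | zero => exact jacobiSym.one_right _
  | succ k =>
    have hdet : cfS a (k + 1) * cfT a k % (cfT a (k + 1)).natAbs
        = (-1) ^ k % (cfT a (k + 1)).natAbs := by
      rw [Int.natAbs_of_nonneg (hpos _).le,
        eq_add_of_sub_eq (cfS_mul_cfT_sub_cfS_mul_cfT a k), Int.add_mul_emod_self_right]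
    have hsign : jacobiSym ((-1) ^ k) (cfT a (k + 1)).natAbs = 1 := by
      rcases Nat.even_or_odd' k with ⟨j, rfl | rfl⟩
      · rw [pow_mul, neg_one_sq, one_pow, jacobiSym.one_left]
      · have h4 : cfT a (2 * j + 1 + 1) % 4 = 1 := hmod (j + 1)
        have habs := Int.natAbs_of_nonneg (hpos (2 * j + 1 + 1)).le
        rw [Odd.neg_one_pow ⟨j, rfl⟩, jacobiSym.at_neg_one (Int.natAbs_odd.mpr (hodd _))]
        exact ZMod.χ₄_nat_one_mod_four (by omega)
    rw [← hsign, ← jacobiSym.mod_left' hdet, jacobiSym.mul_left,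
      jacobiSym_cfT_cfT_succ hpos hodd hmod, mul_one]

end Jacobi

def EventuallyPeriodic {α : Type*} (a : ℕ → α) : Prop :=
  ∃ N p : ℕ, 1 ≤ p ∧ ∀ k, N ≤ k → a (k + p) = a k

theorem eq_of_periodic_of_eqOn_lt {α : Type*} {a b : ℕ → α} {N p : ℕ} (hp : 0 < p)
    (ha : ∀ k, N ≤ k → a (k + p) = a k) (hb : ∀ k, N ≤ k → b (k + p) = b k)
    (h : ∀ i < N + p, a i = b i) : a = b := by
  funext k
  induction k using Nat.strong_induction_on with
  | _ k ih =>
    by_cases hk : k < N + p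
    · exact h k hk
    · obtain ⟨j, rfl⟩ : ∃ j, k = j + p := ⟨k - p, by omega⟩
      rw [ha j (by omega), hb j (by omega), ih j (by omega)]

theorem countable_setOf_eventuallyPeriodic {α : Type*} [Countable α] :
    {a : ℕ → α | EventuallyPeriodic a}.Countable := by
  have hsub : {a : ℕ → α | EventuallyPeriodic a} ⊆
      ⋃ N : ℕ, ⋃ p : ℕ, {a | ∀ k, N ≤ k → a (k + (p + 1)) = a k} := by
    rintro a ⟨N, p, hp, h⟩
    obtain ⟨q, rfl⟩ : ∃ q, p = q + 1 := ⟨p - 1, by omega⟩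
    exact mem_iUnion₂.mpr ⟨N, q, h⟩
  refine .mono hsub (countable_iUnion fun N => countable_iUnion fun p => ?_)
  have hinj : InjOn (fun a : ℕ → α => fun i : Fin (N + (p + 1)) => a i)
      {a | ∀ k, N ≤ k → a (k + (p + 1)) = a k} := fun a ha b hb hab =>
    eq_of_periodic_of_eqOn_lt p.succ_pos ha hb fun i hi => congrFun hab ⟨i, hi⟩
  exact (mapsTo_univ _ _).countable_of_injOn hinj countable_univ

theorem Function.Injective.not_countable_range {α β : Type*} [Uncountable α] {f : α → β}
    (hf : Injective f) : ¬ (range f).Countable := fun h =>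
  not_countable_univ ((mapsTo_univ_iff.mpr mem_range_self).countable_of_injOn hf.injOn h)

instance : Uncountable (Set ℕ) :=
  ⟨fun _ => let ⟨f, hf⟩ := exists_surjective_nat (Set ℕ); cantor_surjective f hf⟩

open Classical in
noncomputable def partialQuotientsOfSet (s : Set ℕ) : ℕ → ℤ
  | 0 => 1
  | 1 => 1
  | k + 2 => if Even k ∨ k / 2 ∈ s then 4 else 2

open Classical in
theorem partialQuotientsOfSet_add_two (s : Set ℕ) (k : ℕ) :
    partialQuotientsOfSet s (k + 2) = if Even k ∨ k / 2 ∈ s then 4 else 2 := rfl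

theorem partialQuotientsOfSet_mem (s : Set ℕ) (k : ℕ) :
    partialQuotientsOfSet s k = 1 ∨ partialQuotientsOfSet s k = 2 ∨
      partialQuotientsOfSet s k = 4 := by
  match k with
  | 0 | 1 => exact .inl rfl
  | k + 2 => rw [partialQuotientsOfSet_add_two]; split_ifs <;> simp

open Classical in
theorem partialQuotientsOfSet_two_mul_add_three (s : Set ℕ) (i : ℕ) :
    partialQuotientsOfSet s (2 * i + 3) = if i ∈ s then 4 else 2 := by
  rw [partialQuotientsOfSet_add_two, show (2 * i + 1) / 2 = i by omega]
  simp

theorem partialQuotientsOfSet_injective : Injective partialQuotientsOfSet := by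
  intro s t h
  ext i
  have hi := congrFun h (2 * i + 3)
  simp only [partialQuotientsOfSet_two_mul_add_three] at hi
  by_cases hs : i ∈ s <;> by_cases ht : i ∈ t <;> simp_all

theorem partialQuotientsOfSet_pos (s : Set ℕ) (k : ℕ) : 0 < partialQuotientsOfSet s (k + 1) := by
  rcases partialQuotientsOfSet_mem s (k + 1) with h | h | h <;> rw [h] <;> norm_num

theorem even_partialQuotientsOfSet (s : Set ℕ) (k : ℕ) :
    Even (partialQuotientsOfSet s (k + 2)) := by
  rw [partialQuotientsOfSet_add_two]; split_ifs <;> decide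

theorem four_dvd_partialQuotientsOfSet (s : Set ℕ) (k : ℕ) :
    4 ∣ partialQuotientsOfSet s (2 * k + 2) := by
  simp [partialQuotientsOfSet_add_two]

theorem uncountably_many_nonperiodic_with_constant_jacobi_sequence :
    ∃ S : Set (ℕ → ℤ), ¬ S.Countable ∧
      ∀ a ∈ S, (∀ k, a k = 1 ∨ a k = 2 ∨ a k = 4) ∧
        ¬(∃ N p : ℕ, 1 ≤ p ∧ ∀ k, N ≤ k → a (k + p) = a k) ∧
        ∀ k, Odd (cfT a k) ∧ jacobiSym (cfS a k) (cfT a k).natAbs = 1 := by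
  refine ⟨range partialQuotientsOfSet \ {a | EventuallyPeriodic a}, fun hS => ?_, ?_⟩
  · exact partialQuotientsOfSet_injective.not_countable_range
      (hS.of_sdiff countable_setOf_eventuallyPeriodic)
  · rintro _ ⟨⟨s, rfl⟩, hper⟩
    have hodd := cfT_odd (a := partialQuotientsOfSet s) odd_one (even_partialQuotientsOfSet s)
    refine ⟨partialQuotientsOfSet_mem s, hper, fun k => ⟨hodd k, ?_⟩⟩
    exact jacobiSym_cfS_cfT (cfT_pos (partialQuotientsOfSet_pos s)) hodd
      (cfT_two_mul_emod_four (four_dvd_partialQuotientsOfSet s)) k
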